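/- arXiv:1603.05250 — 5 statements merged into one kernel-verified Lean document; each statement's English description precedes it below -/
import Mathlib

section
/- For any real R, let p₁ = (1/2, −1, R), p₀ = (0, 0, R), p₂ = (1/2, 1, R) in ℝ³ equipped with the Minkowski quadratic form Q(t,x,y) = −t² + x² + y². Then Q(p₀ − p₁) = Q(p₂ − p₀) = 3/4 and Q(p₂ − p₁) = 4, so that √(Q(p₀ − p₁)) + √(Q(p₂ − p₀)) = √3 < 2 = √(Q(p₂ − p₁)). Hence the proper lengths of the straight (geodesic) segments anchored to the endpoints of A, of B, and of A ∪ B violate subadditivity: S(A) + S(B) < S(A ∪ B). -/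
open Real

/-- The 2+1 dimensional Minkowski quadratic form `Q(t,x,y) = -t² + x² + y²` on `ℝ × ℝ × ℝ`. -/
noncomputable def minkQ (v : ℝ × ℝ × ℝ) : ℝ := -v.1 ^ 2 + v.2.1 ^ 2 + v.2.2 ^ 2

/-- The counterexample of eq. (10): with `p₁ = (1/2,−1,R)`, `p₀ = (0,0,R)`, `p₂ = (1/2,1,R)`,
the chords anchored to the endpoints of `A`, `B`, and `A ∪ B` have
`Q(p₀−p₁) = Q(p₂−p₀) = 3/4`, `Q(p₂−p₁) = 4`, and the proper lengths satisfy
`√3 < 2`, so the entropies `S = length/4` violate subadditivity: `S(A)+S(B) < S(A∪B)`. -/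
theorem minkowski_subadditivity_violation (R : ℝ) :
    let p₁ : ℝ × ℝ × ℝ := (1/2, -1, R)
    let p₀ : ℝ × ℝ × ℝ := (0, 0, R)
    let p₂ : ℝ × ℝ × ℝ := (1/2, 1, R)
    minkQ (p₀ - p₁) = 3/4 ∧ minkQ (p₂ - p₀) = 3/4 ∧ minkQ (p₂ - p₁) = 4 ∧
    Real.sqrt (minkQ (p₀ - p₁)) + Real.sqrt (minkQ (p₂ - p₀)) = Real.sqrt 3 ∧
    Real.sqrt (minkQ (p₂ - p₁)) = 2 ∧
    Real.sqrt 3 < 2 ∧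
    Real.sqrt (minkQ (p₀ - p₁)) / 4 + Real.sqrt (minkQ (p₂ - p₀)) / 4
      < Real.sqrt (minkQ (p₂ - p₁)) / 4 := by
  intro p₁ p₀ p₂
  have h1 : minkQ (p₀ - p₁) = 3/4 := by simp [minkQ, p₀, p₁]; ring
  have h2 : minkQ (p₂ - p₀) = 3/4 := by simp [minkQ, p₀, p₂]; ring
  have h3 : minkQ (p₂ - p₁) = 4 := by simp [minkQ, p₁, p₂]; ring
  have hs4 : Real.sqrt 4 = 2 := by
    rw [show (4:ℝ) = 2^2 by norm_num, Real.sqrt_sq (by norm_num)]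
  have hs34 : Real.sqrt (3/4) = Real.sqrt 3 / 2 := by
    rw [show (3/4:ℝ) = 3/4 from rfl, Real.sqrt_div (by norm_num : (0:ℝ) ≤ 3), hs4]
  have h32 : Real.sqrt 3 < 2 := by
    nlinarith [Real.sq_sqrt (by norm_num : (0:ℝ) ≤ 3), Real.sqrt_nonneg 3]
  refine ⟨h1, h2, h3, ?_, ?_, h32, ?_⟩
  · rw [h1, h2, hs34]; ring
  · rw [h3, hs4]
  · rw [h1, h2, h3, hs34, hs4]; linarith
end

section
/- Let a, ρ, ȧ be positive real numbers satisfying the closed-universe Friedmann constraint ȧ² + 1 = (8π/3) ρ a², and let χ ∈ (0, π/2) satisfy the screen condition sin χ / cos χ = 1/ȧ. Then 4π a² sin² χ = 3/(2ρ). -/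
open Real

/-- Screen area formula (eq. 9) in a closed FRW universe: if `aDot² + 1 = (8π/3) ρ a²` and the
screen condition `sin χ / cos χ = 1/aDot` holds with `χ ∈ (0, π/2)`, then
`4π a² sin²χ = 3/(2ρ)`. -/
theorem screen_area_closed_FRW (a ρ aDot χ : ℝ)
    (ha : 0 < a) (hρ : 0 < ρ) (haDot : 0 < aDot)
    (hFriedmann : aDot ^ 2 + 1 = (8 * π / 3) * ρ * a ^ 2)
    (hχ : χ ∈ Set.Ioo 0 (π / 2))
    (hscreen : Real.sin χ / Real.cos χ = 1 / aDot) :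
    4 * π * a ^ 2 * Real.sin χ ^ 2 = 3 / (2 * ρ) := by
  obtain ⟨h1, h2⟩ := hχ
  have hcos : 0 < Real.cos χ := Real.cos_pos_of_mem_Ioo ⟨by linarith [Real.pi_pos], h2⟩
  have hsin : 0 < Real.sin χ := Real.sin_pos_of_pos_of_lt_pi h1 (by linarith [Real.pi_pos])
  have key : Real.sin χ * aDot = Real.cos χ := by
    field_simp at hscreen; linarith
  have hpyth := Real.sin_sq_add_cos_sq χ
  have hsq : Real.sin χ ^ 2 * (aDot ^ 2 + 1) = 1 := by nlinarith
  rw [hFriedmann] at hsq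
  have hπ := Real.pi_pos
  field_simp
  nlinarith [sq_nonneg a, mul_pos hρ hπ]
end

section
/- Let a, ρ be positive real numbers and ȧ > 1 satisfy the open-universe Friedmann constraint ȧ² − 1 = (8π/3) ρ a², and let χ > 0 satisfy the screen condition tanh χ = 1/ȧ. Then 4π a² sinh² χ = 3/(2ρ). -/
open Real

/-- Screen area formula (eq. 9) in an open FRW universe: if `aDot² − 1 = (8π/3) ρ a²` with
`aDot > 1`, and the screen condition `tanh χ = 1/aDot` holds with `χ > 0`, then
`4π a² sinh²χ = 3/(2ρ)`. -/
theorem screen_area_open_FRW (a ρ aDot χ : ℝ)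
    (ha : 0 < a) (hρ : 0 < ρ) (haDot : 1 < aDot) (hχ : 0 < χ)
    (hFriedmann : aDot ^ 2 - 1 = (8 * π / 3) * ρ * a ^ 2)
    (hscreen : Real.tanh χ = 1 / aDot) :
    4 * π * a ^ 2 * Real.sinh χ ^ 2 = 3 / (2 * ρ) := by
  have hcpos : 0 < Real.cosh χ := Real.cosh_pos χ
  have haDot0 : (0:ℝ) < aDot := by linarith
  have hc : Real.cosh χ = aDot * Real.sinh χ := by
    have := hscreen
    rw [Real.tanh_eq_sinh_div_cosh] at this
    field_simp at this
    linarith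
  have hsq : Real.cosh χ ^ 2 = 1 + Real.sinh χ ^ 2 := Real.cosh_sq' χ
  have hs : Real.sinh χ ^ 2 * (aDot ^ 2 - 1) = 1 := by nlinarith
  have hπ : (0:ℝ) < π := Real.pi_pos
  have hF : aDot ^ 2 - 1 > 0 := by nlinarith
  rw [hFriedmann] at hs
  field_simp at hs ⊢
  nlinarith [sq_nonneg a, sq_nonneg (Real.sinh χ)]
end

section
/- Fix α > 0, C > 0, w > −1, set β = 3(1+w)/(2α), and let a(τ) = C · (sinh(βτ))^{2/(3(1+w))} for τ > 0. Define the total energy density ρ(τ) = (3/(8π)) · (a′(τ)/a(τ))². Then the holographic screen leaf area satisfies 3/(2ρ(τ)) = 4πα² · tanh²(βτ); this function of τ is strictly increasing on (0, ∞), tends to 0 as τ → 0⁺ (the big bang), and tends to 4πα² (the de Sitter horizon area) as τ → ∞. -/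
/-!
The Hubble rate of `a = C sinh(βτ)^p` is `a′/a = pβ coth(βτ)`, and `pβ = 1/α`, so the leaf
area is `3/(2ρ) = 4πα² tanh²(βτ)`. Since `tanh² = 1 - 1/cosh²` and `cosh` increases from `1`
to `∞` on `[0, ∞)`, the area increases strictly from `0` to `4πα²`.
-/

open Real

/-- The scale factor `a(τ) = C sinh(3(1+w)τ/(2α))^{2/(3(1+w))}` (eq. 21) of a flat FRW
universe with vacuum energy and one matter species of equation of state `p = wρ`. -/
noncomputable def scaleFactor (α C w : ℝ) (τ : ℝ) : ℝ :=
  C * Real.sinh (3 * (1 + w) / (2 * α) * τ) ^ (2 / (3 * (1 + w)))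

open Filter Topology Set

namespace Real

@[fun_prop]
theorem continuous_tanh : Continuous tanh := by
  rw [funext tanh_eq_sinh_div_cosh]
  exact continuous_sinh.div continuous_cosh fun x => (cosh_pos x).ne'

theorem tendsto_cosh_atTop : Tendsto cosh atTop atTop :=
  tendsto_atTop_mono' atTop
    (eventually_ge_atTop 0 |>.mono fun _ hx => (self_le_sinh_iff.2 hx).trans (sinh_lt_cosh _).le)
    tendsto_id

theorem tanh_sq_eq_one_sub_inv_cosh_sq (x : ℝ) : tanh x ^ 2 = 1 - (cosh x ^ 2)⁻¹ := by
  have hcosh : cosh x ≠ 0 := (cosh_pos x).ne'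
  rw [tanh_eq_sinh_div_cosh, div_pow, sinh_sq]
  field_simp

theorem strictMonoOn_tanh_sq : StrictMonoOn (fun x => tanh x ^ 2) (Ici 0) := by
  intro x hx y hy hxy
  have hcosh_sq : cosh x ^ 2 < cosh y ^ 2 :=
    pow_lt_pow_left₀ (cosh_strictMonoOn hx hy hxy) (cosh_pos x).le two_ne_zero
  have hinv : (cosh y ^ 2)⁻¹ < (cosh x ^ 2)⁻¹ := inv_strictAnti₀ (by positivity) hcosh_sq
  simp only [tanh_sq_eq_one_sub_inv_cosh_sq]
  linarith

theorem tendsto_tanh_sq_atTop : Tendsto (fun x => tanh x ^ 2) atTop (𝓝 1) := by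
  have hinv : Tendsto (fun x => (cosh x ^ 2)⁻¹) atTop (𝓝 0) :=
    ((tendsto_pow_atTop two_ne_zero).comp tendsto_cosh_atTop).inv_tendsto_atTop
  simpa only [tanh_sq_eq_one_sub_inv_cosh_sq, sub_zero] using hinv.const_sub 1

end Real

theorem logDeriv_const_mul_sinh_rpow {C : ℝ} (hC : C ≠ 0) (β p : ℝ) {τ : ℝ} (hτ : 0 < β * τ) :
    logDeriv (fun t => C * sinh (β * t) ^ p) τ = p * β / tanh (β * τ) := by
  have hsinh : 0 < sinh (β * τ) := sinh_pos_iff.2 hτ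
  have hderiv : HasDerivAt (fun t => sinh (β * t) ^ p)
      (p * sinh (β * τ) ^ (p - 1) * (cosh (β * τ) * β)) τ := by
    have hinner := (hasDerivAt_sinh (β * τ)).comp τ ((hasDerivAt_id τ).const_mul β)
    simp only [mul_one] at hinner
    exact (hasDerivAt_rpow_const (Or.inl hsinh.ne')).comp τ hinner
  have hpow : sinh (β * τ) ^ p ≠ 0 := (rpow_pos_of_pos hsinh p).ne'
  rw [logDeriv_const_mul τ C hC, logDeriv_apply, hderiv.deriv, rpow_sub_one hsinh.ne',
    tanh_eq_sinh_div_cosh]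
  field_simp

theorem logDeriv_scaleFactor {α C w τ : ℝ} (hC : C ≠ 0) (hτ : 0 < 3 * (1 + w) / (2 * α) * τ) :
    logDeriv (scaleFactor α C w) τ = (α * tanh (3 * (1 + w) / (2 * α) * τ))⁻¹ := by
  have hβ : 3 * (1 + w) / (2 * α) ≠ 0 := left_ne_zero_of_mul hτ.ne'
  have hα : α ≠ 0 := by rintro rfl; simp at hβ
  have hw : 1 + w ≠ 0 := by rintro hw; simp [hw] at hβ
  unfold scaleFactor
  rw [logDeriv_const_mul_sinh_rpow hC _ _ hτ]
  field_simp

/-- With total energy density `ρ(τ) = (3/(8π))(a′/a)²`, the leaf area `3/(2ρ(τ))` (eq. 9)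
equals `4πα² tanh²(βτ)`; this is strictly increasing on `(0,∞)`, tends to `0` at the big
bang `τ → 0⁺`, and tends to the de Sitter horizon area `4πα²` as `τ → ∞`. -/
theorem leaf_area_monotone_to_deSitter_horizon (α C w : ℝ)
    (hα : 0 < α) (hC : 0 < C) (hw : -1 < w)
    (β : ℝ) (hβ : β = 3 * (1 + w) / (2 * α))
    (ρ : ℝ → ℝ)
    (hρ : ∀ τ, ρ τ = (3 / (8 * π)) *
      (deriv (scaleFactor α C w) τ / scaleFactor α C w τ) ^ 2)
    (A : ℝ → ℝ) (hA : ∀ τ, A τ = 4 * π * α ^ 2 * Real.tanh (β * τ) ^ 2) :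
    (∀ τ > 0, 3 / (2 * ρ τ) = A τ) ∧
    StrictMonoOn A (Set.Ioi 0) ∧
    Filter.Tendsto A (nhdsWithin 0 (Set.Ioi 0)) (nhds 0) ∧
    Filter.Tendsto A Filter.atTop (nhds (4 * π * α ^ 2)) := by
  have hβpos : 0 < β := hβ ▸ div_pos (by linarith) (by positivity)
  obtain rfl : A = fun τ => 4 * π * α ^ 2 * tanh (β * τ) ^ 2 := funext hA
  refine ⟨fun τ hτ => ?_, ?_, ?_, ?_⟩
  · rw [hρ, ← logDeriv_apply, logDeriv_scaleFactor hC.ne' (hβ ▸ mul_pos hβpos hτ), ← hβ]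
    field_simp
    ring
  · have hscale : StrictMonoOn (fun τ => tanh (β * τ) ^ 2) (Ioi 0) :=
      strictMonoOn_tanh_sq.comp ((strictMono_mul_left_of_pos hβpos).strictMonoOn _)
        fun τ hτ => (mul_pos hβpos hτ).le
    exact (strictMono_mul_left_of_pos (by positivity)).comp_strictMonoOn hscale
  · have hcont : Continuous fun τ => 4 * π * α ^ 2 * tanh (β * τ) ^ 2 := by fun_prop
    simpa using (hcont.tendsto 0).mono_left nhdsWithin_le_nhds
  · simpa using (tendsto_tanh_sq_atTop.comp (tendsto_id.const_mul_atTop hβpos)).const_mul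
      (4 * π * α ^ 2)
end

section
/- For every z ∈ [0, 1] and ψ ∈ [0, π], one has sin²( (1/4) · arccos( z² + (1 − z²) cos 2ψ ) ) ≤ (1 − z²) · min( sin²(ψ/2), cos²(ψ/2) ). Equivalently, in the static sphere approximation the holographic screen entanglement entropy of the cap A_ψ is bounded by the Page bound: S(A_ψ) ≤ min( S_extensive(A_ψ), S_extensive(σ ∖ A_ψ) ), with equality exactly when z = 0. -/
open Real

/-- The static sphere approximation (eq. 17, units `α = 1`) obeys the Page bound
(Corollary 1, eq. 4): for every leaf height `z ∈ [0,1]` and cap angle `ψ ∈ [0, π]`,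
`sin²((1/4) arccos(z² + (1−z²) cos 2ψ)) ≤ (1−z²) min(sin²(ψ/2), cos²(ψ/2))`,
i.e. `S(A_ψ) ≤ min(S_extensive(A_ψ), S_extensive(σ∖A_ψ))`. -/
theorem static_sphere_Page_bound :
    ∀ z ∈ Set.Icc (0 : ℝ) 1, ∀ ψ ∈ Set.Icc (0 : ℝ) π,
      Real.sin ((1 / 4) * Real.arccos (z ^ 2 + (1 - z ^ 2) * Real.cos (2 * ψ))) ^ 2
        ≤ (1 - z ^ 2) * min (Real.sin (ψ / 2) ^ 2) (Real.cos (ψ / 2) ^ 2) := by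
  intro z hz ψ hψ
  obtain ⟨hz0, hz1⟩ := hz
  obtain ⟨hψ0, hψπ⟩ := hψ
  set u := Real.cos ψ with hu
  have hu1 : |u| ≤ 1 := Real.abs_cos_le_one ψ
  have hu1' := abs_le.mp hu1
  set a := 1 - z ^ 2 with ha
  have ha0 : 0 ≤ a := by nlinarith
  have ha1 : a ≤ 1 := by nlinarith
  -- rewrite the argument of arccos
  have hc : z ^ 2 + (1 - z ^ 2) * Real.cos (2 * ψ) = 1 - 2 * (a * (1 - u ^ 2)) := by
    rw [Real.cos_two_mul]; ring
  have hsq : |u| ^ 2 = u ^ 2 := sq_abs u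
  have h1u : 0 ≤ 1 - u ^ 2 := by nlinarith [mul_nonneg (by linarith [hu1'.1] : (0:ℝ) ≤ 1 + u) (by linarith [hu1'.2] : (0:ℝ) ≤ 1 - u)]
  have hle : a * (1 - u ^ 2) ≤ 1 := by nlinarith
  have hge : 0 ≤ a * (1 - u ^ 2) := mul_nonneg ha0 h1u
  set c := z ^ 2 + (1 - z ^ 2) * Real.cos (2 * ψ) with hcdef
  have hc1 : -1 ≤ c := by rw [hc]; linarith
  have hc2 : c ≤ 1 := by rw [hc]; linarith
  set θ := Real.arccos c with hθ
  have hθ0 : 0 ≤ θ := Real.arccos_nonneg c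
  have hθπ : θ ≤ π := Real.arccos_le_pi c
  have hcosθ : Real.cos θ = c := Real.cos_arccos hc1 hc2
  have hhalf : Real.cos (θ / 2) = Real.sqrt ((1 + c) / 2) := by
    rw [← hcosθ]; exact Real.cos_half (by linarith) hθπ
  have hkey : (1 + c) / 2 = z ^ 2 + a * u ^ 2 := by rw [hc, ha]; ring
  -- sin²(ψ/2), cos²(ψ/2) in terms of u
  have hsψ : Real.sin (ψ / 2) ^ 2 = (1 - u) / 2 := by
    have := Real.cos_two_mul' (ψ / 2)
    have h2 : 2 * (ψ / 2) = ψ := by ring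
    rw [h2] at this
    have h3 := Real.sin_sq_add_cos_sq (ψ / 2)
    rw [hu]; linarith
  have hcψ : Real.cos (ψ / 2) ^ 2 = (1 + u) / 2 := by
    have := Real.sin_sq_add_cos_sq (ψ / 2)
    rw [hu] at hsψ ⊢; linarith [hsψ]
  have hm : min (Real.sin (ψ / 2) ^ 2) (Real.cos (ψ / 2) ^ 2) = (1 - |u|) / 2 := by
    rcases le_total 0 u with h | h
    · rw [abs_of_nonneg h, min_eq_left (by rw [hsψ, hcψ]; linarith), hsψ]
    · rw [abs_of_nonpos h, min_eq_right (by rw [hsψ, hcψ]; linarith), hcψ]; ring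
  -- sin²(θ/4) = (1 - cos(θ/2))/2
  have hs : Real.sin ((1 / 4) * θ) ^ 2 = (1 - Real.cos (θ / 2)) / 2 := by
    have := Real.cos_two_mul' ((1 / 4) * θ)
    have h2 : 2 * ((1 / 4) * θ) = θ / 2 := by ring
    rw [h2] at this
    have h3 := Real.sin_sq_add_cos_sq (1 / 4 * θ)
    linarith
  -- key bound : 1 - a(1-|u|) ≤ √(z² + a u²)
  have hb : 1 - a * (1 - |u|) ≤ Real.sqrt (z ^ 2 + a * u ^ 2) := by
    have hLHS : 0 ≤ 1 - a * (1 - |u|) := by nlinarith [abs_nonneg u]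
    have hy : (0:ℝ) ≤ z ^ 2 + a * u ^ 2 := by positivity
    have hid : z ^ 2 + a * u ^ 2 - (1 - a * (1 - |u|)) ^ 2 = a * (1 - a) * (1 - |u|) ^ 2 := by
      rw [ha, ← hsq]; ring
    have hpos : 0 ≤ a * (1 - a) * (1 - |u|) ^ 2 :=
      mul_nonneg (mul_nonneg ha0 (by linarith)) (sq_nonneg _)
    exact (Real.le_sqrt hLHS hy).mpr (by linarith)
  clear_value u a c θ
  calc Real.sin ((1 / 4) * θ) ^ 2 = (1 - Real.cos (θ / 2)) / 2 := hs
    _ = (1 - Real.sqrt (z ^ 2 + a * u ^ 2)) / 2 := by rw [hhalf, hkey]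
    _ ≤ (1 - (1 - a * (1 - |u|))) / 2 := by linarith
    _ = a * ((1 - |u|) / 2) := by ring
    _ = a * min (Real.sin (ψ / 2) ^ 2) (Real.cos (ψ / 2) ^ 2) := by rw [hm]
end
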